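/- arXiv:2101.12652 — 4 statements merged into one kernel-verified Lean document; each statement's English description precedes it below -/
import Mathlib

section
/- Let N ≥ 1, σ > 0, and let u₀ ∈ C²([−1−σ,1+σ]) be even with u₀ > 0 on (−1,1), u₀(±1) = 0 and u₀ < 0 on [−1−σ,−1) ∪ (1,1+σ]. Let n ∈ ℕ, μ₁ > μ₂ > … > μ_n > 0, α₁ = −1, α₂,…,α_n ∈ ℝ, and for i = 1,…,n let ω_i ∈ C([−1−σ,1+σ]) be positive, even, with ω_i(0) = 1 and ω_i nonincreasing in |y|. Define φ(x,y) = Σ_{j=1}^N Σ_{i=1}^n α_i cosh(√μ_i x_j) ω_i(y) and, for ε > 0 small enough that u₀(0) + ε φ(0,…,0,0) > 0, let Ω_ε be the connected component of {(x,y) ∈ ℝ^N × (−1−σ,1+σ) : u₀(y) + ε φ(x,y) > 0} containing the origin. Then for every η ∈ (0,σ) there exists ε₀ > 0 such that for all ε ∈ (0,ε₀), Ω_ε ⊆ [−M_ε, M_ε]^N × [−1−η, 1+η], where M_ε = (1/√μ₁) log( 3‖u₀‖_{L^∞(−1−η,1+η)} / (ε ω₁(1+η)) ). -/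
open MeasureTheory Set Filter Topology

noncomputable section

/-- Points of `ℝ^{N+1}` written `(x, y)` with `x ∈ ℝ^N`, `y ∈ ℝ`. -/
abbrev Pt (N : ℕ) := (Fin N → ℝ) × ℝ

/-- `φ(x,y) = Σ_j Σ_i α_i cosh(√μ_i x_j) ω_i(y)`. -/
def phi (N n : ℕ) (μ α : Fin n → ℝ) (ω : Fin n → ℝ → ℝ) (p : Pt N) : ℝ :=
  ∑ j : Fin N, ∑ i : Fin n, α i * Real.cosh (Real.sqrt (μ i) * p.1 j) * ω i p.2

/-- `Ω_ε`: the connected component containing the origin of the set where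
`u₀(y) + ε φ(x,y) > 0` (within the strip `ℝ^N × (−1−σ, 1+σ)`). -/
def Ome (N n : ℕ) (σ : ℝ) (u₀ : ℝ → ℝ) (μ α : Fin n → ℝ) (ω : Fin n → ℝ → ℝ) (ε : ℝ) :
    Set (Pt N) :=
  connectedComponentIn
    {p : Pt N | p.2 ∈ Ioo (-1 - σ) (1 + σ) ∧ 0 < u₀ p.2 + ε * phi N n μ α ω p} 0

/-!
Put `M = M_ε` and `h = 1 + η`. On the box `|xⱼ| ≤ M`, `|y| ≤ h`, the modes `i ≠ 1` contribute at
most `ε N ∑ |αᵢ| e^{√μᵢ M}`, which is of order `ε^{1 - √(μᵢ/μ₁)}` and so tends to `0` with `ε`;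
the leading mode `α₁ = -1` only lowers `u₀ + εφ`. On the faces `|y| = h` the value
`u₀(±h) < 0` therefore wins, and on a face `|xⱼ| = M` the leading mode is at most
`-ε cosh(√μ₁ M) ω₁(y) ≤ -3‖u₀‖/2`, which beats `u₀ ≤ ‖u₀‖`. So `u₀ + εφ ≤ 0` on the boundary of
the box, which the connected component of the origin therefore cannot cross.
-/

theorem connectedComponentIn_subset_of_isClosed_inter_subset {X : Type*} [TopologicalSpace X]
    {S U C : Set X} {x : X} (hU : IsOpen U) (hC : IsClosed C) (hUC : U ⊆ C) (hS : C ∩ S ⊆ U)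
    (hx : x ∈ U) : connectedComponentIn S x ⊆ U := by
  by_cases hxS : x ∈ S
  · refine isPreconnected_connectedComponentIn.subset_of_closure_inter_subset hU
      ⟨x, mem_connectedComponentIn hxS, hx⟩ fun p ⟨hpU, hpS⟩ => hS ⟨?_, ?_⟩
    · exact closure_minimal hUC hC hpU
    · exact connectedComponentIn_subset S x hpS
  · simp [connectedComponentIn_eq_empty hxS]

theorem Real.tendsto_mul_div_rpow_nhdsGT_zero {c θ : ℝ} (hc : 0 ≤ c) (hθ : θ < 1) :
    Tendsto (fun ε : ℝ => ε * (c / ε) ^ θ) (𝓝[>] 0) (𝓝 0) := by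
  have hpow : Tendsto (fun ε : ℝ => ε ^ (1 - θ)) (𝓝[>] 0) (𝓝 0) := by
    have h := (Real.continuousAt_rpow_const 0 (1 - θ) (Or.inr (by linarith))).tendsto
    rw [Real.zero_rpow (by linarith)] at h
    exact h.mono_left nhdsWithin_le_nhds
  have hlim : Tendsto (fun ε : ℝ => c ^ θ * ε ^ (1 - θ)) (𝓝[>] 0) (𝓝 0) := by
    simpa using hpow.const_mul (c ^ θ)
  refine hlim.congr' ?_
  filter_upwards [self_mem_nhdsWithin] with ε (hε : 0 < ε)
  rw [Real.div_rpow hc hε.le, Real.rpow_sub hε, Real.rpow_one]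
  field_simp

theorem Real.cosh_le_exp_abs (x : ℝ) : Real.cosh x ≤ Real.exp |x| := by
  rw [← Real.cosh_abs, Real.cosh_eq]
  nlinarith [Real.exp_le_exp.2 (neg_le_self (abs_nonneg x))]

theorem Real.exp_abs_div_two_le_cosh (x : ℝ) : Real.exp |x| / 2 ≤ Real.cosh x := by
  rw [← Real.cosh_abs, Real.cosh_eq]
  nlinarith [Real.exp_pos (-|x|)]

theorem le_sSup_abs_image_Ioo {u : ℝ → ℝ} {a b : ℝ} (hu : ContinuousOn u (Icc a b)) (hab : a < b)
    (ha : u a ≤ 0) (hb : u b ≤ 0) {y : ℝ} (hy : y ∈ Icc a b) :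
    u y ≤ sSup ((fun y => |u y|) '' Ioo a b) := by
  have hbdd : BddAbove ((fun y => |u y|) '' Ioo a b) :=
    (isCompact_Icc.image_of_continuousOn hu.abs).bddAbove.mono (image_mono Ioo_subset_Icc_self)
  have habs_le {z : ℝ} (hz : z ∈ Ioo a b) : |u z| ≤ sSup ((fun y => |u y|) '' Ioo a b) :=
    le_csSup hbdd ⟨z, hz, rfl⟩
  rcases eq_endpoints_or_mem_Ioo_of_mem_Icc hy with rfl | rfl | hy
  · obtain ⟨z, hz⟩ := nonempty_Ioo.2 hab
    exact ha.trans ((abs_nonneg _).trans (habs_le hz))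
  · obtain ⟨z, hz⟩ := nonempty_Ioo.2 hab
    exact hb.trans ((abs_nonneg _).trans (habs_le hz))
  · exact (le_abs_self _).trans (habs_le hy)

def openBox (N : ℕ) (M h : ℝ) : Set (Pt N) := {p | (∀ j, |p.1 j| < M) ∧ |p.2| < h}

def closedBox (N : ℕ) (M h : ℝ) : Set (Pt N) := {p | (∀ j, |p.1 j| ≤ M) ∧ |p.2| ≤ h}

theorem isOpen_openBox (N : ℕ) (M h : ℝ) : IsOpen (openBox N M h) := by
  simp only [openBox, ofPred_and, ofPred_forall]
  exact (isOpen_iInter_of_finite fun j =>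
    isOpen_lt ((continuous_apply j).comp continuous_fst).abs continuous_const).inter
    (isOpen_lt continuous_snd.abs continuous_const)

theorem isClosed_closedBox (N : ℕ) (M h : ℝ) : IsClosed (closedBox N M h) := by
  simp only [closedBox, ofPred_and, ofPred_forall]
  exact (isClosed_iInter fun j =>
    isClosed_le ((continuous_apply j).comp continuous_fst).abs continuous_const).inter
    (isClosed_le continuous_snd.abs continuous_const)

theorem openBox_subset_closedBox (N : ℕ) (M h : ℝ) : openBox N M h ⊆ closedBox N M h :=
  fun _ hp => ⟨fun j => (hp.1 j).le, hp.2.le⟩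

theorem zero_mem_openBox {N : ℕ} {M h : ℝ} (hM : 0 < M) (hh : 0 < h) :
    (0 : Pt N) ∈ openBox N M h :=
  ⟨fun _ => by simpa using hM, by simpa using hh⟩

def phiTail (N : ℕ) {n : ℕ} (μ α : Fin n → ℝ) (i₀ : Fin n) (M : ℝ) : ℝ :=
  N * ∑ i ∈ Finset.univ.erase i₀, |α i| * Real.exp (√(μ i) * M)

section Phi

open Finset

variable {N n : ℕ} (μ α : Fin n → ℝ) (ω : Fin n → ℝ → ℝ)

theorem phi_le_add_phiTail {i₀ : Fin n} {M : ℝ} {p : Pt N} (hx : ∀ j, |p.1 j| ≤ M)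
    (hω : ∀ i, 0 ≤ ω i p.2 ∧ ω i p.2 ≤ 1) :
    phi N n μ α ω p ≤
      α i₀ * ω i₀ p.2 * ∑ j, Real.cosh (√(μ i₀) * p.1 j) + phiTail N μ α i₀ M := by
  have hterm (j : Fin N) (i : Fin n) :
      α i * Real.cosh (√(μ i) * p.1 j) * ω i p.2 ≤ |α i| * Real.exp (√(μ i) * M) := by
    have hcosh : Real.cosh (√(μ i) * p.1 j) ≤ Real.exp (√(μ i) * M) := by
      refine (Real.cosh_le_exp_abs _).trans (Real.exp_le_exp.2 ?_)
      rw [abs_mul, abs_of_nonneg (Real.sqrt_nonneg _)]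
      exact mul_le_mul_of_nonneg_left (hx j) (Real.sqrt_nonneg _)
    calc α i * Real.cosh (√(μ i) * p.1 j) * ω i p.2
        ≤ |α i| * Real.cosh (√(μ i) * p.1 j) * 1 := by
          have := (hω i).1
          have := Real.cosh_pos (√(μ i) * p.1 j)
          gcongr
          exacts [le_abs_self _, (hω i).2]
      _ ≤ |α i| * Real.exp (√(μ i) * M) := by rw [mul_one]; gcongr
  calc phi N n μ α ω p
      = ∑ j, α i₀ * Real.cosh (√(μ i₀) * p.1 j) * ω i₀ p.2 +
          ∑ j, ∑ i ∈ univ.erase i₀, α i * Real.cosh (√(μ i) * p.1 j) * ω i p.2 := by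
        rw [phi, ← sum_add_distrib]
        exact sum_congr rfl fun j _ => (add_sum_erase _ _ (mem_univ i₀)).symm
    _ ≤ ∑ j, α i₀ * Real.cosh (√(μ i₀) * p.1 j) * ω i₀ p.2 +
          ∑ _j : Fin N, ∑ i ∈ univ.erase i₀, |α i| * Real.exp (√(μ i) * M) :=
        add_le_add le_rfl (sum_le_sum fun j _ => sum_le_sum fun i _ => hterm j i)
    _ = _ := by
        rw [phiTail, sum_const, card_univ, Fintype.card_fin, nsmul_eq_mul, mul_sum, mul_sum]
        congr 1
        exact sum_congr rfl fun j _ => by ring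

theorem tendsto_mul_phiTail {i₀ : Fin n} (hμ₀ : 0 < μ i₀) (hlt : ∀ i ≠ i₀, μ i < μ i₀)
    {c : ℝ} (hc : 0 < c) :
    Tendsto (fun ε => ε * phiTail N μ α i₀ (1 / √(μ i₀) * Real.log (c / ε))) (𝓝[>] 0) (𝓝 0) := by
  have hs₀ : 0 < √(μ i₀) := Real.sqrt_pos.2 hμ₀
  have hterm (i : Fin n) (hi : i ∈ univ.erase i₀) :
      Tendsto (fun ε => |α i| * (ε * (c / ε) ^ (√(μ i) / √(μ i₀)))) (𝓝[>] 0) (𝓝 0) := by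
    have hθ : √(μ i) / √(μ i₀) < 1 := by
      rw [div_lt_one hs₀, Real.sqrt_lt_sqrt_iff_of_pos hμ₀]
      exact hlt i (ne_of_mem_erase hi)
    simpa using (Real.tendsto_mul_div_rpow_nhdsGT_zero hc.le hθ).const_mul |α i|
  have hsum := (tendsto_finsetSum (univ.erase i₀) hterm).const_mul (N : ℝ)
  simp only [sum_const_zero, mul_zero] at hsum
  refine hsum.congr' ?_
  filter_upwards [self_mem_nhdsWithin] with ε (hε : 0 < ε)
  simp only [phiTail, mul_sum]
  refine sum_congr rfl fun i _ => ?_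
  rw [Real.rpow_def_of_pos (div_pos hc hε)]
  ring_nf

theorem Ome_subset_openBox {σ : ℝ} {u₀ : ℝ → ℝ} {i₀ : Fin n} {ε M h w : ℝ} (hα : α i₀ = -1)
    (hω : ∀ i, ∀ y ∈ Ioo (-1 - σ) (1 + σ), 0 ≤ ω i y ∧ ω i y ≤ 1)
    (hε : 0 ≤ ε) (hM : 0 < M) (hh : 0 < h) (hw : ∀ y, |y| ≤ h → w ≤ ω i₀ y)
    (htop : ∀ y, |y| = h → u₀ y + ε * phiTail N μ α i₀ M < 0)
    (hside : ∀ y, |y| ≤ h →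
      u₀ y + ε * phiTail N μ α i₀ M < ε * (w * Real.exp (√(μ i₀) * M) / 2)) :
    Ome N n σ u₀ μ α ω ε ⊆ openBox N M h := by
  refine connectedComponentIn_subset_of_isClosed_inter_subset (isOpen_openBox N M h)
    (isClosed_closedBox N M h) (openBox_subset_closedBox N M h) ?_ (zero_mem_openBox hM hh)
  rintro p ⟨⟨hx, hy⟩, hpy, hpos⟩
  set bump := ω i₀ p.2 * ∑ j, Real.cosh (√(μ i₀) * p.1 j)
  have hbump : 0 ≤ bump := mul_nonneg (hω i₀ _ hpy).1 (sum_nonneg fun _ _ => (Real.cosh_pos _).le)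
  have hφ : ε * phi N n μ α ω p ≤ ε * phiTail N μ α i₀ M - ε * bump := by
    have := phi_le_add_phiTail μ α ω (i₀ := i₀) hx fun i => hω i _ hpy
    rw [hα, neg_one_mul] at this
    linear_combination mul_le_mul_of_nonneg_left this hε
  refine ⟨fun j => (hx j).lt_of_ne fun hj => ?_, hy.lt_of_ne fun hyh => ?_⟩
  · have hbump_ge : w * Real.exp (√(μ i₀) * M) / 2 ≤ bump := by
      have hexp : Real.exp (√(μ i₀) * M) = Real.exp |√(μ i₀) * p.1 j| := by
        rw [abs_mul, abs_of_nonneg (Real.sqrt_nonneg _), hj]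
      calc w * Real.exp (√(μ i₀) * M) / 2
          ≤ ω i₀ p.2 * (Real.exp |√(μ i₀) * p.1 j| / 2) := by
            rw [hexp, mul_div_assoc]
            exact mul_le_mul_of_nonneg_right (hw _ hy) (by positivity)
        _ ≤ bump := by
            refine mul_le_mul_of_nonneg_left ?_ (hω i₀ _ hpy).1
            exact (Real.exp_abs_div_two_le_cosh _).trans (single_le_sum
              (f := fun j => Real.cosh (√(μ i₀) * p.1 j)) (fun _ _ => (Real.cosh_pos _).le)
              (mem_univ j))
    linarith [hside _ hy, mul_le_mul_of_nonneg_left hbump_ge hε]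
  · linarith [htop _ hyh, mul_nonneg hε hbump]

theorem eventually_Ome_subset_openBox {σ : ℝ} {u₀ : ℝ → ℝ} {i₀ : Fin n} {h w K δ : ℝ}
    (hα : α i₀ = -1) (hω : ∀ i, ∀ y ∈ Ioo (-1 - σ) (1 + σ), 0 ≤ ω i y ∧ ω i y ≤ 1)
    (hμ₀ : 0 < μ i₀) (hμlt : ∀ i ≠ i₀, μ i < μ i₀) (hh : 0 < h)
    (hw₀ : 0 < w) (hw : ∀ y, |y| ≤ h → w ≤ ω i₀ y) (hK₀ : 0 < K) (hK : ∀ y, |y| ≤ h → u₀ y ≤ K)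
    (hδ : 0 < δ) (htop : ∀ y, |y| = h → u₀ y ≤ -δ) :
    ∀ᶠ ε in 𝓝[>] 0,
      Ome N n σ u₀ μ α ω ε ⊆ openBox N (1 / √(μ i₀) * Real.log (3 * K / (ε * w))) h := by
  have htail := (tendsto_mul_phiTail μ α (N := N) hμ₀ hμlt (by positivity : 0 < 3 * K / w)
    ).eventually_lt_const (lt_min hδ (half_pos hK₀))
  simp only [← div_mul_eq_div_div_swap] at htail
  filter_upwards [htail, Ioo_mem_nhdsGT (div_pos hK₀ hw₀)] with ε hε_tail ⟨hε, hεK⟩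
  rw [lt_min_iff] at hε_tail
  rw [lt_div_iff₀ hw₀] at hεK
  have hratio : 1 < 3 * K / (ε * w) := by rw [one_lt_div (by positivity)]; linarith
  have hexp : Real.exp (√(μ i₀) * (1 / √(μ i₀) * Real.log (3 * K / (ε * w)))) =
      3 * K / (ε * w) := by
    rw [← mul_assoc, mul_one_div_cancel (Real.sqrt_pos.2 hμ₀).ne', one_mul,
      Real.exp_log (by linarith)]
  refine Ome_subset_openBox μ α ω hα hω hε.le
    (mul_pos (one_div_pos.2 (Real.sqrt_pos.2 hμ₀)) (Real.log_pos hratio)) hh hw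
    (fun y hy => by linarith [htop y hy]) (fun y hy => ?_)
  -- the factor 3 leaves room `K` for `u₀ y` and `K / 2` for the tail
  have : ε * (w * (3 * K / (ε * w)) / 2) = 3 * K / 2 := by field_simp
  rw [hexp, this]
  linarith [hK y hy]

end Phi

theorem statement3_general (N : ℕ) (σ : ℝ)
    (u₀ : ℝ → ℝ) (hu₀C : ContDiffOn ℝ 2 u₀ (Icc (-1 - σ) (1 + σ)))
    (hu₀even : ∀ y, u₀ (-y) = u₀ y)
    (hu₀pos : ∀ y ∈ Ioo (-1:ℝ) 1, 0 < u₀ y)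
    (hu₀neg : ∀ y ∈ Ico (-1 - σ) (-1) ∪ Ioc 1 (1 + σ), u₀ y < 0)
    (n : ℕ) (hn : 0 < n)
    (μ : Fin n → ℝ) (hμanti : StrictAnti μ) (hμpos : ∀ i, 0 < μ i)
    (α : Fin n → ℝ) (hα1 : α ⟨0, hn⟩ = -1)
    (ω : Fin n → ℝ → ℝ)
    (hωpos : ∀ i, ∀ y ∈ Icc (-1 - σ) (1 + σ), 0 < ω i y)
    (hω0 : ∀ i, ω i 0 = 1)
    (hωmono : ∀ i, ∀ y ∈ Icc (-1 - σ) (1 + σ), ∀ z ∈ Icc (-1 - σ) (1 + σ),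
      |y| ≤ |z| → ω i z ≤ ω i y) :
    ∀ η ∈ Ioo (0:ℝ) σ, ∃ ε₀ > 0, ∀ ε ∈ Ioo (0:ℝ) ε₀,
      Ome N n σ u₀ μ α ω ε ⊆
        {p : Pt N |
          (∀ j, |p.1 j| ≤ (1 / Real.sqrt (μ ⟨0, hn⟩)) *
            Real.log (3 * sSup ((fun y => |u₀ y|) '' Ioo (-1 - η) (1 + η)) /
              (ε * ω ⟨0, hn⟩ (1 + η)))) ∧
          p.2 ∈ Icc (-1 - η) (1 + η)} := by
  rintro η ⟨hη, hησ⟩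
  have hIcc : Icc (-1 - η) (1 + η) ⊆ Icc (-1 - σ) (1 + σ) :=
    Icc_subset_Icc (by linarith) (by linarith)
  have hmem_of_abs_le {y : ℝ} (hy : |y| ≤ 1 + η) : y ∈ Icc (-1 - η) (1 + η) := by
    rw [← neg_add']
    exact abs_le.1 hy
  have hedge : u₀ (1 + η) < 0 := hu₀neg _ (Or.inr ⟨by linarith, by linarith⟩)
  have hK {y : ℝ} (hy : y ∈ Icc (-1 - η) (1 + η)) :
      u₀ y ≤ sSup ((fun y => |u₀ y|) '' Ioo (-1 - η) (1 + η)) :=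
    le_sSup_abs_image_Ioo (hu₀C.continuousOn.mono hIcc) (by linarith)
      (by rw [← neg_add', hu₀even]; exact hedge.le) hedge.le hy
  have hω (i : Fin n) (y : ℝ) (hy : y ∈ Icc (-1 - σ) (1 + σ)) : 0 ≤ ω i y ∧ ω i y ≤ 1 :=
    ⟨(hωpos i y hy).le, hω0 i ▸ hωmono i 0 ⟨by linarith, by linarith⟩ y hy (by simp)⟩
  have hbox := eventually_Ome_subset_openBox μ α ω (N := N) hα1
    (fun i y hy => hω i y (Ioo_subset_Icc_self hy)) (hμpos _)
    (fun i hi => hμanti (lt_of_le_of_ne (Fin.le_def.2 (Nat.zero_le _)) hi.symm)) (by linarith)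
    (hωpos _ _ (hIcc ⟨by linarith, le_rfl⟩))
    (fun y hy => hωmono _ y (hIcc (hmem_of_abs_le hy)) (1 + η) (hIcc ⟨by linarith, le_rfl⟩)
      (by rwa [abs_of_pos (by linarith : 0 < 1 + η)]))
    ((hu₀pos 0 ⟨by norm_num, by norm_num⟩).trans_le (hK ⟨by linarith, by linarith⟩))
    (fun y hy => hK (hmem_of_abs_le hy)) (neg_pos.2 hedge)
    (fun y hy => by rcases abs_choice y with h | h <;> rw [← hy, h] <;> simp [hu₀even])
  obtain ⟨ε₀, hε₀, hsub⟩ := mem_nhdsGT_iff_exists_Ioo_subset.1 hbox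
  exact ⟨ε₀, hε₀, fun ε hε p hp =>
    ⟨fun j => ((hsub hε hp).1 j).le, hmem_of_abs_le (hsub hε hp).2.le⟩⟩

theorem statement3 (N : ℕ) (hN : 1 ≤ N) (σ : ℝ) (hσ : 0 < σ)
    (u₀ : ℝ → ℝ) (hu₀C : ContDiffOn ℝ 2 u₀ (Icc (-1 - σ) (1 + σ)))
    (hu₀even : ∀ y, u₀ (-y) = u₀ y)
    (hu₀pos : ∀ y ∈ Ioo (-1:ℝ) 1, 0 < u₀ y)
    (hu₀1 : u₀ 1 = 0) (hu₀m1 : u₀ (-1) = 0)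
    (hu₀neg : ∀ y ∈ Ico (-1 - σ) (-1) ∪ Ioc 1 (1 + σ), u₀ y < 0)
    (n : ℕ) (hn : 0 < n)
    (μ : Fin n → ℝ) (hμanti : StrictAnti μ) (hμpos : ∀ i, 0 < μ i)
    (α : Fin n → ℝ) (hα1 : α ⟨0, hn⟩ = -1)
    (ω : Fin n → ℝ → ℝ)
    (hωcont : ∀ i, ContinuousOn (ω i) (Icc (-1 - σ) (1 + σ)))
    (hωpos : ∀ i, ∀ y ∈ Icc (-1 - σ) (1 + σ), 0 < ω i y)
    (hωeven : ∀ i y, ω i (-y) = ω i y)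
    (hω0 : ∀ i, ω i 0 = 1)
    (hωmono : ∀ i, ∀ y ∈ Icc (-1 - σ) (1 + σ), ∀ z ∈ Icc (-1 - σ) (1 + σ),
      |y| ≤ |z| → ω i z ≤ ω i y) :
    ∀ η ∈ Ioo (0:ℝ) σ, ∃ ε₀ > 0, ∀ ε ∈ Ioo (0:ℝ) ε₀,
      Ome N n σ u₀ μ α ω ε ⊆
        {p : Pt N |
          (∀ j, |p.1 j| ≤ (1 / Real.sqrt (μ ⟨0, hn⟩)) *
            Real.log (3 * sSup ((fun y => |u₀ y|) '' Ioo (-1 - η) (1 + η)) /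
              (ε * ω ⟨0, hn⟩ (1 + η)))) ∧
          p.2 ∈ Icc (-1 - η) (1 + η)} :=
  statement3_general N σ u₀ hu₀C hu₀even hu₀pos hu₀neg n hn μ hμanti hμpos α hα1 ω hωpos hω0 hωmono
end
end

section
/- Let u₀ ∈ C²((−1−σ,1+σ)) satisfy u₀'(0) = 0 and u₀''(0) = −λ f(u₀(0)) < 0 (where λ > 0 and f(u₀(0)) > 0). For i = 1,…,n let ω_i ∈ C²((−1−σ,1+σ)) be even with ω_i(0) = 1 and ω_i'(0) = 0, let μ₁ > … > μ_n > 0 and α₁,…,α_n ∈ ℝ, and suppose t₁ < … < t_k are nondegenerate local maximum points of g(t) = Σ_{i=1}^n α_i cosh(√μ_i t), i.e. g'(t_m) = 0 and g''(t_m) < 0 for each m. Define U_ε(x,y) = u₀(y) + ε Σ_{j=1}^N Σ_{i=1}^n α_i cosh(√μ_i x_j) ω_i(y) on ℝ^N × (−1−σ,1+σ). Then there exists ε₀ > 0 such that for all ε ∈ (0,ε₀) and every m = 1,…,k, the point (t_m,…,t_m,0) is a nondegenerate local maximum of U_ε: ∇U_ε(t_m,…,t_m,0) = 0 and the Hessian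 matrix of U_ε at (t_m,…,t_m,0) is negative definite. In particular U_ε has at least k distinct nondegenerate local maximum points. -/
open MeasureTheory Set Filter Topology

noncomputable section

/-- Second directional derivative of `u` at `p` along `v`. -/
def D2 {N : ℕ} (u : Pt N → ℝ) (v : Pt N) (p : Pt N) : ℝ :=
  fderiv ℝ (fun q => fderiv ℝ u q v) p v

/-- `U_ε(x,y) = u₀(y) + ε Σ_j Σ_i α_i cosh(√μ_i x_j) ω_i(y)`. -/
def Ueps (N n : ℕ) (u₀ : ℝ → ℝ) (μ α : Fin n → ℝ) (ω : Fin n → ℝ → ℝ) (ε : ℝ)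
    (p : Pt N) : ℝ :=
  u₀ p.2 + ε * ∑ j : Fin N, ∑ i : Fin n, α i * Real.cosh (Real.sqrt (μ i) * p.1 j) * ω i p.2

/-
At a diagonal point `p = ((s,…,s), 0)` the restriction of `U_ε` to a line `τ ↦ p + τ v` is a sum
of one-variable products `h_i(s + τ a_j) ω_i(τ b)`, so its first two derivatives at `τ = 0` are
computed by the one-variable product and chain rules. Because `ω_i(0) = 1` and `ω_i'(0) = 0`, the
gradient at `p` is `u₀'(0) b + ε g'(s) Σ_j a_j` and the Hessian is diagonal,
`(u₀''(0) + ε N Σ_i h_i(s) ω_i''(0)) b² + ε g''(s) Σ_j a_j²`, where `h_i(s) = α_i cosh(√μ_i s)` and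
`g = Σ_i h_i`. At `s = t_m` the gradient vanishes and, since `u₀''(0) < 0` and `g''(t_m) < 0`, both
coefficients are negative once `ε` is small. Finally, a critical point with negative definite
Hessian is a local maximum: by compactness of the unit sphere the Hessian stays negative
semidefinite nearby, so `U_ε` is concave along every segment leaving `p`.
-/

section SecondDerivativeTest

variable {E : Type*} [NormedAddCommGroup E] [NormedSpace ℝ E]

lemma ContinuousLinearMap.apply_self_nonpos_of_forall_sphere (B : E →L[ℝ] E →L[ℝ] ℝ)
    (hB : ∀ w ∈ Metric.sphere (0 : E) 1, B w w < 0) (v : E) : B v v ≤ 0 := by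
  rcases eq_or_ne v 0 with rfl | hv
  · simp
  have hv' : 0 < ‖v‖ := norm_pos_iff.2 hv
  have hBv : B v v = ‖v‖ ^ 2 * B (‖v‖⁻¹ • v) (‖v‖⁻¹ • v) := by
    simp only [map_smul, smul_apply, smul_eq_mul]
    field_simp
  rw [hBv]
  exact mul_nonpos_of_nonneg_of_nonpos (sq_nonneg _)
    (hB _ (by simp [norm_smul, hv'.ne'])).le

lemma le_of_hasDerivAt_of_hasDerivAt_nonpos {φ φ' φ'' : ℝ → ℝ}
    (hφ : ∀ τ ∈ Icc (0 : ℝ) 1, HasDerivAt φ (φ' τ) τ)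
    (hφ' : ∀ τ ∈ Icc (0 : ℝ) 1, HasDerivAt φ' (φ'' τ) τ)
    (h0 : φ' 0 = 0) (hφ'' : ∀ τ ∈ Icc (0 : ℝ) 1, φ'' τ ≤ 0) : φ 1 ≤ φ 0 := by
  have antitone_of_deriv {f f' : ℝ → ℝ} (hf : ∀ τ ∈ Icc (0 : ℝ) 1, HasDerivAt f (f' τ) τ)
      (hf' : ∀ τ ∈ Icc (0 : ℝ) 1, f' τ ≤ 0) : AntitoneOn f (Icc 0 1) :=
    antitoneOn_of_hasDerivWithinAt_nonpos (convex_Icc 0 1)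
      (fun τ hτ => (hf τ hτ).continuousAt.continuousWithinAt)
      (fun τ hτ => (hf τ (interior_subset hτ)).hasDerivWithinAt)
      (fun τ hτ => hf' τ (interior_subset hτ))
  have hφ'_nonpos : ∀ τ ∈ Icc (0 : ℝ) 1, φ' τ ≤ 0 := fun τ hτ =>
    h0 ▸ antitone_of_deriv hφ' hφ'' (left_mem_Icc.2 zero_le_one) hτ hτ.1
  exact antitone_of_deriv hφ hφ'_nonpos (left_mem_Icc.2 zero_le_one)
    (right_mem_Icc.2 zero_le_one) zero_le_one

lemma isLocalMax_of_fderiv_eq_zero_of_eventually_fderiv_fderiv_nonpos {u : E → ℝ} {p : E}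
    (h1 : fderiv ℝ u p = 0)
    (h2 : ∀ᶠ q in 𝓝 p, DifferentiableAt ℝ u q ∧ DifferentiableAt ℝ (fderiv ℝ u) q ∧
      ∀ v, fderiv ℝ (fderiv ℝ u) q v v ≤ 0) :
    IsLocalMax u p := by
  obtain ⟨δ, hδ, hball⟩ := Metric.eventually_nhds_iff_ball.1 h2
  filter_upwards [Metric.ball_mem_nhds p hδ] with q hq
  set h := q - p
  have hseg : ∀ τ ∈ Icc (0 : ℝ) 1, p + τ • h ∈ Metric.ball p δ := fun τ hτ =>
    (convex_ball p δ).add_smul_sub_mem (Metric.mem_ball_self hδ) hq hτ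
  have hline : ∀ τ : ℝ, HasDerivAt (fun τ : ℝ => p + τ • h) h τ := fun τ => by
    simpa using ((hasDerivAt_id τ).smul_const h).const_add p
  have key := le_of_hasDerivAt_of_hasDerivAt_nonpos (φ := fun τ => u (p + τ • h))
    (φ' := fun τ => fderiv ℝ u (p + τ • h) h)
    (φ'' := fun τ => fderiv ℝ (fderiv ℝ u) (p + τ • h) h h)
    (fun τ hτ => (hball _ (hseg τ hτ)).1.hasFDerivAt.comp_hasDerivAt τ (hline τ))
    (fun τ hτ => ((ContinuousLinearMap.apply ℝ ℝ h).hasFDerivAt.comp_hasDerivAt τ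
      ((hball _ (hseg τ hτ)).2.1.hasFDerivAt.comp_hasDerivAt τ (hline τ))))
    (by simp [h1]) (fun τ hτ => (hball _ (hseg τ hτ)).2.2 h)
  simpa [h] using key

theorem isLocalMax_of_fderiv_eq_zero_of_fderiv_fderiv_neg [FiniteDimensional ℝ E] {u : E → ℝ}
    {p : E} (hu : ContDiffAt ℝ 2 u p) (h1 : fderiv ℝ u p = 0)
    (h2 : ∀ v ≠ 0, fderiv ℝ (fderiv ℝ u) p v v < 0) :
    IsLocalMax u p := by
  have hBcont : ContinuousAt (fderiv ℝ (fderiv ℝ u)) p :=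
    ((hu.fderiv_right (m := 1) le_rfl).fderiv_right (m := 0) (by norm_num)).continuousAt
  -- negativity on the unit sphere is an open condition in `q`, uniformly by compactness
  have hsphere : ∀ᶠ q in 𝓝 p, ∀ w ∈ Metric.sphere (0 : E) 1,
      fderiv ℝ (fderiv ℝ u) q w w < 0 := by
    refine (isCompact_sphere (0 : E) 1).eventually_forall_of_forall_eventually fun w hw => ?_
    have hcont : ContinuousAt (fun z : E × E => fderiv ℝ (fderiv ℝ u) z.1 z.2 z.2) (p, w) :=
      ((hBcont.comp continuousAt_fst).clm_apply continuousAt_snd).clm_apply continuousAt_snd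
    exact hcont.eventually_lt continuousAt_const (h2 w (ne_zero_of_mem_unit_sphere ⟨w, hw⟩))
  refine isLocalMax_of_fderiv_eq_zero_of_eventually_fderiv_fderiv_nonpos h1 ?_
  filter_upwards [hu.eventually (by simp), hsphere] with q hq hqS
  exact ⟨hq.differentiableAt (by simp),
    (hq.fderiv_right (m := 1) le_rfl).differentiableAt (by simp),
    (fderiv ℝ (fderiv ℝ u) q).apply_self_nonpos_of_forall_sphere hqS⟩

end SecondDerivativeTest

section LineRestriction

variable {E : Type*} [NormedAddCommGroup E] [NormedSpace ℝ E] {u : E → ℝ} {p : E}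

lemma fderiv_apply_eq_deriv_comp_add_smul (hu : DifferentiableAt ℝ u p) (v : E) :
    fderiv ℝ u p v = deriv (fun τ : ℝ => u (p + τ • v)) 0 := by
  simpa using (DifferentiableAt.deriv_comp_add_smul (y := v) (t := (0 : ℝ))
    (by simpa using hu)).symm

lemma fderiv_fderiv_apply (hu : DifferentiableAt ℝ (fderiv ℝ u) p) (v : E) :
    fderiv ℝ (fun q => fderiv ℝ u q v) p v = fderiv ℝ (fderiv ℝ u) p v v := by
  rw [fderiv_clm_apply hu (differentiableAt_const v)]
  simp

lemma fderiv_fderiv_apply_eq_iteratedDeriv_two (hu : ContDiffAt ℝ 2 u p) (v : E) :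
    fderiv ℝ (fun q => fderiv ℝ u q v) p v = iteratedDeriv 2 (fun τ : ℝ => u (p + τ • v)) 0 := by
  have hline : Continuous fun τ : ℝ => p + τ • v := by fun_prop
  have hderiv : deriv (fun τ : ℝ => u (p + τ • v)) =ᶠ[𝓝 0]
      fun τ => fderiv ℝ u (p + τ • v) v := by
    filter_upwards [(hline.tendsto' 0 p (by simp)).eventually (hu.eventually (by simp))]
      with τ hτ
    exact (hτ.differentiableAt (by simp)).deriv_comp_add_smul
  have hu' : DifferentiableAt ℝ (fun q => fderiv ℝ u q v) (p + (0 : ℝ) • v) := by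
    simpa using ((hu.fderiv_right (m := 1) le_rfl).differentiableAt (by simp)).clm_apply
      (differentiableAt_const v)
  rw [iteratedDeriv_succ, iteratedDeriv_one, hderiv.deriv_eq, hu'.deriv_comp_add_smul]
  simp

end LineRestriction

section AffineLineDerivatives

variable {f g : ℝ → ℝ} {x : ℝ}

lemma ContDiffAt.comp_add_mul {r : WithTop ℕ∞} (hf : ContDiffAt ℝ r f x) (a : ℝ) :
    ContDiffAt ℝ r (fun τ => f (x + τ * a)) 0 :=
  ContDiffAt.comp (g := f) (0 : ℝ) (by simpa using hf) (by fun_prop)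

lemma hasDerivAt_comp_add_mul (hf : DifferentiableAt ℝ f x) (a : ℝ) :
    HasDerivAt (fun τ => f (x + τ * a)) (a * deriv f x) 0 := by
  have hlin : HasDerivAt (fun τ : ℝ => x + τ * a) a 0 := by
    simpa using ((hasDerivAt_id (0 : ℝ)).mul_const a).const_add x
  have hf' : HasDerivAt f (deriv f x) (x + 0 * a) := by simpa using hf.hasDerivAt
  rw [mul_comm]
  exact hf'.comp 0 hlin

lemma iteratedDeriv_two_comp_add_mul (hf : ContDiffAt ℝ 2 f x) (a : ℝ) :
    iteratedDeriv 2 (fun τ => f (x + τ * a)) 0 = a ^ 2 * iteratedDeriv 2 f x := by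
  have hlin : ContDiffAt ℝ 2 (fun τ : ℝ => x + τ * a) 0 := by fun_prop
  have := iteratedDeriv_comp_two (g := f) (by simpa using hf) hlin
  simp only [Function.comp_def] at this
  rw [this]
  simp [iteratedDeriv_succ, mul_comm]

lemma iteratedDeriv_two_fun_mul (hf : ContDiffAt ℝ 2 f x) (hg : ContDiffAt ℝ 2 g x) :
    iteratedDeriv 2 (fun τ => f τ * g τ) x =
      iteratedDeriv 2 f x * g x + 2 * (deriv f x * deriv g x) + f x * iteratedDeriv 2 g x := by
  rw [iteratedDeriv_fun_mul hf hg]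
  simp [Finset.sum_range_succ]
  ring

end AffineLineDerivatives

section PerturbedProfile

variable {N : ℕ} {ι : Type*} [Fintype ι] (u₀ : ℝ → ℝ) (h ω : ι → ℝ → ℝ) (ε : ℝ)

def perturbedProfile (p : Pt N) : ℝ :=
  u₀ p.2 + ε * ∑ j : Fin N, ∑ i, h i (p.1 j) * ω i p.2

variable {u₀ h ω} {p : Pt N}

lemma perturbedProfile_add_smul (v : Pt N) (τ : ℝ) :
    perturbedProfile u₀ h ω ε (p + τ • v) = u₀ (p.2 + τ * v.2) +
      ε * ∑ j : Fin N, ∑ i, h i (p.1 j + τ * v.1 j) * ω i (p.2 + τ * v.2) :=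
  rfl

variable (hu₀ : ContDiffAt ℝ 2 u₀ p.2) (hh : ∀ i j, ContDiffAt ℝ 2 (h i) (p.1 j))
  (hω : ∀ i, ContDiffAt ℝ 2 (ω i) p.2)
include hu₀ hh hω

lemma contDiffAt_perturbedProfile : ContDiffAt ℝ 2 (perturbedProfile u₀ h ω ε) p := by
  have hfst : ∀ j, ContDiffAt ℝ 2 (fun q : Pt N => q.1 j) p := fun j => by fun_prop
  exact (hu₀.comp p contDiffAt_snd).add (contDiffAt_const.mul (ContDiffAt.sum fun j _ =>
    ContDiffAt.sum fun i _ => ((hh i j).comp p (hfst j)).mul ((hω i).comp p contDiffAt_snd)))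

lemma fderiv_perturbedProfile_apply (v : Pt N) :
    fderiv ℝ (perturbedProfile u₀ h ω ε) p v = v.2 * deriv u₀ p.2 +
      ε * ∑ j : Fin N, ∑ i, (v.1 j * deriv (h i) (p.1 j) * ω i p.2 +
        h i (p.1 j) * (v.2 * deriv (ω i) p.2)) := by
  have hd : ∀ {f : ℝ → ℝ} {x : ℝ}, ContDiffAt ℝ 2 f x → DifferentiableAt ℝ f x :=
    fun hf => hf.differentiableAt (by simp)
  rw [fderiv_apply_eq_deriv_comp_add_smul
    ((contDiffAt_perturbedProfile ε hu₀ hh hω).differentiableAt (by simp))]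
  simp only [perturbedProfile_add_smul]
  refine (((hasDerivAt_comp_add_mul (hd hu₀) v.2).add (HasDerivAt.const_mul ε
    (HasDerivAt.fun_sum fun j _ => HasDerivAt.fun_sum fun i _ =>
      (hasDerivAt_comp_add_mul (hd (hh i j)) (v.1 j)).mul
        (hasDerivAt_comp_add_mul (hd (hω i)) v.2)))).deriv).trans ?_
  simp

lemma D2_perturbedProfile (v : Pt N) :
    D2 (perturbedProfile u₀ h ω ε) v p =
      v.2 ^ 2 * iteratedDeriv 2 u₀ p.2 + ε * ∑ j : Fin N, ∑ i,
        (v.1 j ^ 2 * iteratedDeriv 2 (h i) (p.1 j) * ω i p.2 +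
          2 * (v.1 j * deriv (h i) (p.1 j) * (v.2 * deriv (ω i) p.2)) +
          h i (p.1 j) * (v.2 ^ 2 * iteratedDeriv 2 (ω i) p.2)) := by
  have hterm : ∀ i j, ContDiffAt ℝ 2
      (fun τ => h i (p.1 j + τ * v.1 j) * ω i (p.2 + τ * v.2)) 0 := fun i j =>
    ((hh i j).comp_add_mul _).mul ((hω i).comp_add_mul _)
  rw [D2, fderiv_fderiv_apply_eq_iteratedDeriv_two (contDiffAt_perturbedProfile ε hu₀ hh hω)]
  simp only [perturbedProfile_add_smul]
  rw [iteratedDeriv_fun_add (hu₀.comp_add_mul _) (contDiffAt_const.mul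
      (ContDiffAt.sum fun j _ => ContDiffAt.sum fun i _ => hterm i j)),
    iteratedDeriv_const_mul _ (ContDiffAt.sum fun j _ => ContDiffAt.sum fun i _ => hterm i j),
    iteratedDeriv_fun_sum fun j _ => ContDiffAt.sum fun i _ => hterm i j,
    iteratedDeriv_two_comp_add_mul hu₀]
  congr 2
  refine Finset.sum_congr rfl fun j _ => ?_
  rw [iteratedDeriv_fun_sum fun i _ => hterm i j]
  refine Finset.sum_congr rfl fun i _ => ?_
  rw [iteratedDeriv_two_fun_mul ((hh i j).comp_add_mul _) ((hω i).comp_add_mul _),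
    iteratedDeriv_two_comp_add_mul (hh i j), iteratedDeriv_two_comp_add_mul (hω i),
    (hasDerivAt_comp_add_mul ((hh i j).differentiableAt (by simp)) _).deriv,
    (hasDerivAt_comp_add_mul ((hω i).differentiableAt (by simp)) _).deriv]
  simp

end PerturbedProfile

lemma exists_pos_forall_add_mul_neg {ι : Type*} [Finite ι] {a : ℝ} (ha : a < 0) (c : ι → ℝ) :
    ∃ ε₀ > 0, ∀ ε ∈ Ioo 0 ε₀, ∀ m, a + ε * c m < 0 := by
  have hev : ∀ᶠ ε in 𝓝 (0 : ℝ), ∀ m, a + ε * c m < 0 :=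
    eventually_all.2 fun m =>
      (continuous_const.add (continuous_id.mul continuous_const)).continuousAt.eventually_lt
        continuousAt_const (by simpa using ha)
  obtain ⟨δ, hδ, hball⟩ := Metric.eventually_nhds_iff.1 hev
  exact ⟨δ, hδ, fun ε hε => hball (by rw [Real.dist_eq, sub_zero, abs_of_pos hε.1]; exact hε.2)⟩

lemma mul_sq_add_mul_sum_sq_neg {N : ℕ} {A B : ℝ} (hA : A < 0) (hB : B < 0) {v : Pt N}
    (hv : v ≠ 0) : A * v.2 ^ 2 + B * ∑ j, v.1 j ^ 2 < 0 := by
  have hS : 0 ≤ ∑ j, v.1 j ^ 2 := by positivity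
  rcases eq_or_ne v.2 0 with h2 | h2
  · obtain ⟨j, hj⟩ := Function.ne_iff.1 fun h1 : v.1 = 0 => hv (Prod.ext h1 h2)
    have hS' : 0 < ∑ j, v.1 j ^ 2 :=
      Finset.sum_pos' (fun j _ => sq_nonneg _) ⟨j, Finset.mem_univ j, pow_two_pos_of_ne_zero hj⟩
    rw [h2]
    nlinarith
  · have : 0 < v.2 ^ 2 := by positivity
    nlinarith

section DiagonalPoint

variable {N : ℕ} {ι : Type*} [Fintype ι] {u₀ : ℝ → ℝ} {h ω : ι → ℝ → ℝ} (ε : ℝ) {s : ℝ}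
  (hu₀ : ContDiffAt ℝ 2 u₀ 0) (hh : ∀ i, ContDiffAt ℝ 2 (h i) s)
  (hω : ∀ i, ContDiffAt ℝ 2 (ω i) 0) (hω0 : ∀ i, ω i 0 = 1) (hω'0 : ∀ i, deriv (ω i) 0 = 0)
include hu₀ hh hω hω0 hω'0

lemma fderiv_perturbedProfile_diagonal_apply (v : Pt N) :
    fderiv ℝ (perturbedProfile u₀ h ω ε) ((fun _ => s, 0) : Pt N) v =
      v.2 * deriv u₀ 0 + ε * ((∑ j, v.1 j) * deriv (fun s => ∑ i, h i s) s) := by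
  rw [fderiv_perturbedProfile_apply ε hu₀ (fun i _ => hh i) hω,
    deriv_fun_sum fun i _ => (hh i).differentiableAt (by simp), Finset.sum_mul]
  simp [hω0, hω'0, Finset.mul_sum, mul_comm]

lemma D2_perturbedProfile_diagonal (v : Pt N) :
    D2 (perturbedProfile u₀ h ω ε) v ((fun _ => s, 0) : Pt N) =
      (iteratedDeriv 2 u₀ 0 + ε * (N * ∑ i, h i s * iteratedDeriv 2 (ω i) 0)) * v.2 ^ 2 +
        ε * iteratedDeriv 2 (fun s => ∑ i, h i s) s * ∑ j, v.1 j ^ 2 := by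
  have hinner : ∀ j, ∑ i, (v.1 j ^ 2 * iteratedDeriv 2 (h i) s * ω i 0 +
      2 * (v.1 j * deriv (h i) s * (v.2 * deriv (ω i) 0)) +
      h i s * (v.2 ^ 2 * iteratedDeriv 2 (ω i) 0)) =
      v.1 j ^ 2 * ∑ i, iteratedDeriv 2 (h i) s +
        v.2 ^ 2 * ∑ i, h i s * iteratedDeriv 2 (ω i) 0 := fun j => by
    simp only [hω0, hω'0, mul_zero, add_zero, mul_one, Finset.sum_add_distrib, Finset.mul_sum]
    exact congrArg _ (Finset.sum_congr rfl fun i _ => by ring)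
  rw [D2_perturbedProfile ε hu₀ (fun i _ => hh i) hω,
    iteratedDeriv_fun_sum fun i _ => hh i]
  simp only [hinner, Finset.sum_add_distrib, Finset.sum_const, Finset.card_univ,
    Fintype.card_fin, nsmul_eq_mul, ← Finset.sum_mul]
  ring

lemma fderiv_eq_zero_and_D2_neg_and_isLocalMax_perturbedProfile_diagonal
    (hu₀' : deriv u₀ 0 = 0) (hg' : deriv (fun s => ∑ i, h i s) s = 0)
    (hA : iteratedDeriv 2 u₀ 0 + ε * (N * ∑ i, h i s * iteratedDeriv 2 (ω i) 0) < 0)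
    (hB : ε * iteratedDeriv 2 (fun s => ∑ i, h i s) s < 0) :
    fderiv ℝ (perturbedProfile u₀ h ω ε) ((fun _ => s, 0) : Pt N) = 0 ∧
      (∀ w : Pt N, w ≠ 0 → D2 (perturbedProfile u₀ h ω ε) w ((fun _ => s, 0) : Pt N) < 0) ∧
      IsLocalMax (perturbedProfile u₀ h ω ε) ((fun _ => s, 0) : Pt N) := by
  have hUC : ContDiffAt ℝ 2 (perturbedProfile u₀ h ω ε) ((fun _ => s, 0) : Pt N) :=
    contDiffAt_perturbedProfile ε hu₀ (fun i _ => hh i) hω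
  have hcrit : fderiv ℝ (perturbedProfile u₀ h ω ε) ((fun _ => s, 0) : Pt N) = 0 :=
    ContinuousLinearMap.ext fun v => by
      rw [fderiv_perturbedProfile_diagonal_apply ε hu₀ hh hω hω0 hω'0, hu₀', hg']
      simp
  have hD2 : ∀ w : Pt N, w ≠ 0 →
      D2 (perturbedProfile u₀ h ω ε) w ((fun _ => s, 0) : Pt N) < 0 := fun w hw => by
    rw [D2_perturbedProfile_diagonal ε hu₀ hh hω hω0 hω'0]
    exact mul_sq_add_mul_sum_sq_neg hA hB hw
  refine ⟨hcrit, hD2, isLocalMax_of_fderiv_eq_zero_of_fderiv_fderiv_neg hUC hcrit fun w hw => ?_⟩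
  rw [← fderiv_fderiv_apply ((hUC.fderiv_right (m := 1) le_rfl).differentiableAt (by simp))]
  exact hD2 w hw

end DiagonalPoint

theorem statement6_general (N : ℕ) (hN : 1 ≤ N) (σ : ℝ) (hσ : 0 < σ)
    (lam : ℝ) (hlam : 0 < lam) (f : ℝ → ℝ)
    (u₀ : ℝ → ℝ) (hu₀C : ContDiffOn ℝ 2 u₀ (Ioo (-1 - σ) (1 + σ)))
    (hu₀' : deriv u₀ 0 = 0)
    (hf0 : 0 < f (u₀ 0))
    (hu₀'' : deriv (deriv u₀) 0 = -(lam * f (u₀ 0)))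
    (n : ℕ) (μ : Fin n → ℝ)
    (α : Fin n → ℝ)
    (ω : Fin n → ℝ → ℝ)
    (hωC : ∀ i, ContDiffOn ℝ 2 (ω i) (Ioo (-1 - σ) (1 + σ)))
    (hω0 : ∀ i, ω i 0 = 1)
    (hω'0 : ∀ i, deriv (ω i) 0 = 0)
    (k : ℕ) (t : Fin k → ℝ) (ht : StrictMono t)
    -- t₁ < … < t_k are nondegenerate local maximum points of g(s) = Σ_i α_i cosh(√μ_i s)
    (hg' : ∀ m, deriv (fun s => ∑ i, α i * Real.cosh (Real.sqrt (μ i) * s)) (t m) = 0)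
    (hg'' : ∀ m, deriv (deriv (fun s => ∑ i, α i * Real.cosh (Real.sqrt (μ i) * s))) (t m) < 0) :
    ∃ ε₀ > (0:ℝ), ∀ ε ∈ Ioo (0:ℝ) ε₀,
      -- the k points ((t_m,…,t_m), 0) are pairwise distinct …
      (∀ m m' : Fin k, m ≠ m' →
        (((fun _ => t m) : Fin N → ℝ), (0:ℝ)) ≠ (((fun _ => t m') : Fin N → ℝ), (0:ℝ))) ∧
      -- … nondegenerate local maxima of U_ε: critical points with negative definite Hessian
      ∀ m : Fin k,
        fderiv ℝ (Ueps N n u₀ μ α ω ε) (((fun _ => t m) : Fin N → ℝ), (0:ℝ)) = 0 ∧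
        (∀ w : Pt N, w ≠ 0 →
          D2 (Ueps N n u₀ μ α ω ε) w (((fun _ => t m) : Fin N → ℝ), (0:ℝ)) < 0) ∧
        IsLocalMax (Ueps N n u₀ μ α ω ε) (((fun _ => t m) : Fin N → ℝ), (0:ℝ)) := by
  set h : Fin n → ℝ → ℝ := fun i s => α i * Real.cosh (Real.sqrt (μ i) * s)
  have hI : Ioo (-1 - σ) (1 + σ) ∈ 𝓝 (0 : ℝ) := Ioo_mem_nhds (by linarith) (by linarith)
  have hu₀2 : ContDiffAt ℝ 2 u₀ 0 := hu₀C.contDiffAt hI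
  have hω2 : ∀ i, ContDiffAt ℝ 2 (ω i) 0 := fun i => (hωC i).contDiffAt hI
  have hh : ∀ i s, ContDiffAt ℝ 2 (h i) s := fun i s => by fun_prop
  have iteratedDeriv_two_eq (F : ℝ → ℝ) : iteratedDeriv 2 F = deriv (deriv F) := by
    simp [iteratedDeriv_succ]
  have hu₀neg : iteratedDeriv 2 u₀ 0 < 0 := by
    rw [iteratedDeriv_two_eq, hu₀'']
    exact neg_neg_of_pos (mul_pos hlam hf0)
  obtain ⟨ε₀, hε₀, hsmall⟩ := exists_pos_forall_add_mul_neg hu₀neg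
    fun m => (N : ℝ) * ∑ i, h i (t m) * iteratedDeriv 2 (ω i) 0
  have hU : ∀ ε, Ueps N n u₀ μ α ω ε = perturbedProfile u₀ h ω ε := fun _ => rfl
  simp only [hU]
  refine ⟨ε₀, hε₀, fun ε hε => ⟨fun m m' hmm' heq => hmm' (ht.injective ?_), fun m => ?_⟩⟩
  · exact congrFun (congrArg Prod.fst heq) ⟨0, hN⟩
  refine fderiv_eq_zero_and_D2_neg_and_isLocalMax_perturbedProfile_diagonal ε hu₀2
    (fun i => hh i _) hω2 hω0 hω'0 hu₀' (hg' m) (hsmall ε hε m)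
    (mul_neg_of_pos_of_neg hε.1 ?_)
  rw [iteratedDeriv_two_eq]
  exact hg'' m

theorem statement6 (N : ℕ) (hN : 1 ≤ N) (σ : ℝ) (hσ : 0 < σ)
    (lam : ℝ) (hlam : 0 < lam) (f : ℝ → ℝ)
    (u₀ : ℝ → ℝ) (hu₀C : ContDiffOn ℝ 2 u₀ (Ioo (-1 - σ) (1 + σ)))
    (hu₀' : deriv u₀ 0 = 0)
    (hf0 : 0 < f (u₀ 0))
    (hu₀'' : deriv (deriv u₀) 0 = -(lam * f (u₀ 0)))
    (n : ℕ) (μ : Fin n → ℝ) (hμanti : StrictAnti μ) (hμpos : ∀ i, 0 < μ i)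
    (α : Fin n → ℝ)
    (ω : Fin n → ℝ → ℝ)
    (hωC : ∀ i, ContDiffOn ℝ 2 (ω i) (Ioo (-1 - σ) (1 + σ)))
    (hωeven : ∀ i y, ω i (-y) = ω i y)
    (hω0 : ∀ i, ω i 0 = 1)
    (hω'0 : ∀ i, deriv (ω i) 0 = 0)
    (k : ℕ) (t : Fin k → ℝ) (ht : StrictMono t)
    -- t₁ < … < t_k are nondegenerate local maximum points of g(s) = Σ_i α_i cosh(√μ_i s)
    (hg' : ∀ m, deriv (fun s => ∑ i, α i * Real.cosh (Real.sqrt (μ i) * s)) (t m) = 0)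
    (hg'' : ∀ m, deriv (deriv (fun s => ∑ i, α i * Real.cosh (Real.sqrt (μ i) * s))) (t m) < 0) :
    ∃ ε₀ > (0:ℝ), ∀ ε ∈ Ioo (0:ℝ) ε₀,
      -- the k points ((t_m,…,t_m), 0) are pairwise distinct …
      (∀ m m' : Fin k, m ≠ m' →
        (((fun _ => t m) : Fin N → ℝ), (0:ℝ)) ≠ (((fun _ => t m') : Fin N → ℝ), (0:ℝ))) ∧
      -- … nondegenerate local maxima of U_ε: critical points with negative definite Hessian
      ∀ m : Fin k,
        fderiv ℝ (Ueps N n u₀ μ α ω ε) (((fun _ => t m) : Fin N → ℝ), (0:ℝ)) = 0 ∧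
        (∀ w : Pt N, w ≠ 0 →
          D2 (Ueps N n u₀ μ α ω ε) w (((fun _ => t m) : Fin N → ℝ), (0:ℝ)) < 0) ∧
        IsLocalMax (Ueps N n u₀ μ α ω ε) (((fun _ => t m) : Fin N → ℝ), (0:ℝ)) :=
  statement6_general N hN σ hσ lam hlam f u₀ hu₀C hu₀' hf0 hu₀'' n μ α ω hωC hω0 hω'0 k t ht hg'
    hg''
end
end

section
/- For every k ∈ ℕ and every μ₀ > 0 there exist n ∈ ℕ, real numbers μ₁, …, μ_n with μ₀/4 > μ₁ > μ₂ > … > μ_n > 0, and coefficients α₁, …, α_n ∈ ℝ with α₁ = −1 (the coefficient attached to the largest frequency μ₁), such that the function F(t) = Σ_{i=1}^n α_i cosh(√μ_i · t) has at least k distinct nondegenerate local maximum points, i.e. at least k points t with F'(t) = 0 and F''(t) < 0. -/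
/-!
Since `sinh u * U_m(cosh u) = sinh ((m + 1) u)` for the Chebyshev polynomials `U_m` of the second
kind, and `U_0, …, U_N` span the polynomials of degree `≤ N`, every function
`g u = sinh u * p (cosh u)` with `deg p ≤ N` is a combination of `sinh u, …, sinh ((N + 1) u)`
whose top coefficient is `p.coeff N / 2 ^ N`. For
`p = ∏_{j < k} (X - cosh (2j + 1)) (X - cosh (2j + 2))` the function `g` vanishes at `u = 2j + 2`
with `g' = sinh² u * p' (cosh u) > 0` there, since every other pair of factors of `p` is positive
at that point. Integrating `-g (s t)` term by term gives a cosh-sum with frequencies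
`s, 2s, …, (2k + 1)s`, and it has nondegenerate maxima at `t = (2j + 2) / s`; taking `s` small
makes the largest frequency smaller than `μ₀ / 4`.
-/

open Polynomial Real Finset

theorem Polynomial.Chebyshev.exists_sum_smul_U_eq (p : ℝ[X]) {N : ℕ} (hp : p.natDegree ≤ N) :
    ∃ a : Fin (N + 1) → ℝ, a (Fin.last N) = p.coeff N / 2 ^ N ∧ ∑ i, a i • U ℝ (i : ℕ) = p := by
  let S : Sequence ℝ := ⟨fun i => U ℝ i, degree_U_natCast ℝ⟩
  have hspan : Submodule.span ℝ (Set.range fun i : Fin (N + 1) => U ℝ (i : ℕ)) =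
      degreeLT ℝ (N + 1) := by
    rw [← S.span_degreeLT fun i _ => by simp [S, leadingCoeff_U_natCast], ← Fin.range_val,
      ← Set.range_comp]
    rfl
  have hmem : p ∈ degreeLT ℝ (N + 1) := by
    rw [mem_degreeLT]
    exact (degree_le_of_natDegree_le hp).trans_lt (by exact_mod_cast N.lt_succ_self)
  obtain ⟨a, ha⟩ := (Submodule.mem_span_range_iff_exists_fun ℝ).1 (hspan ▸ hmem)
  refine ⟨a, ?_, ha⟩
  have hlow (i : Fin N) : (U ℝ (i : ℕ)).coeff N = 0 :=
    coeff_eq_zero_of_natDegree_lt (by rw [Chebyshev.natDegree_U_natCast]; exact i.is_lt)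
  have htop : (U ℝ N).coeff N = 2 ^ N := by
    rw [← Chebyshev.leadingCoeff_U_natCast ℝ N, leadingCoeff, Chebyshev.natDegree_U_natCast]
  rw [← ha, finsetSum_coeff, Fin.sum_univ_castSucc]
  simp [hlow, htop]

theorem sinh_mul_eval_cosh_eq_sum (p : ℝ[X]) {N : ℕ} (hp : p.natDegree ≤ N) :
    ∃ a : Fin (N + 1) → ℝ, a (Fin.last N) = p.coeff N / 2 ^ N ∧
      ∀ u, sinh u * p.eval (cosh u) = ∑ i, a i * sinh ((i + 1) * u) := by
  obtain ⟨a, ha_last, ha⟩ := Chebyshev.exists_sum_smul_U_eq p hp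
  refine ⟨a, ha_last, fun u => ?_⟩
  rw [← ha, eval_finsetSum, Finset.mul_sum]
  refine Finset.sum_congr rfl fun i _ => ?_
  rw [eval_smul, smul_eq_mul, mul_left_comm, mul_comm (sinh u), Chebyshev.U_real_cosh]
  push_cast
  rfl

theorem hasDerivAt_sinh_mul_eval_cosh (p : ℝ[X]) {u : ℝ} (hu : p.eval (cosh u) = 0) :
    HasDerivAt (fun v => sinh v * p.eval (cosh v)) (sinh u ^ 2 * p.derivative.eval (cosh u)) u :=
  ((hasDerivAt_sinh u).mul ((p.hasDerivAt (cosh u)).comp u (hasDerivAt_cosh u))).congr_deriv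
    (by rw [Function.comp_apply, hu]; ring)

noncomputable def pairedRootPoly (r : ℕ → ℝ) (k : ℕ) : ℝ[X] :=
  ∏ j ∈ range k, (X - C (r (2 * j))) * (X - C (r (2 * j + 1)))

theorem pairedRootPoly_monic (r : ℕ → ℝ) (k : ℕ) : (pairedRootPoly r k).Monic :=
  monic_prod_of_monic _ _ fun _ _ => (monic_X_sub_C _).mul (monic_X_sub_C _)

theorem natDegree_pairedRootPoly (r : ℕ → ℝ) (k : ℕ) :
    (pairedRootPoly r k).natDegree = 2 * k := by
  rw [pairedRootPoly,
    natDegree_prod_of_monic _ _ fun _ _ => (monic_X_sub_C _).mul (monic_X_sub_C _)]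
  simp [natDegree_mul (X_sub_C_ne_zero _) (X_sub_C_ne_zero _), mul_comm]

theorem eval_pairedRootPoly_odd (r : ℕ → ℝ) {j k : ℕ} (hj : j < k) :
    (pairedRootPoly r k).eval (r (2 * j + 1)) = 0 := by
  rw [pairedRootPoly, eval_prod]
  exact prod_eq_zero (mem_range.2 hj) (by simp)

theorem eval_derivative_pairedRootPoly_odd_pos {r : ℕ → ℝ} (hr : StrictMono r) {j k : ℕ}
    (hj : j < k) : 0 < (pairedRootPoly r k).derivative.eval (r (2 * j + 1)) := by
  set q : ℕ → ℝ[X] := fun i => (X - C (r (2 * i))) * (X - C (r (2 * i + 1)))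
  rw [pairedRootPoly, ← mul_prod_erase _ q (mem_range.2 hj), derivative_mul, eval_add, eval_mul,
    eval_mul, eval_prod]
  have hq_root : (q j).eval (r (2 * j + 1)) = 0 := by simp [q]
  have hq_deriv : 0 < (derivative (q j)).eval (r (2 * j + 1)) := by
    simpa [q] using hr (Nat.lt_succ_self (2 * j))
  -- `r (2j+1)` lies outside the root interval of every other pair, where `q i` is positive.
  have hq_other : 0 < ∏ i ∈ (range k).erase j, (q i).eval (r (2 * j + 1)) := by
    refine prod_pos fun i hi => ?_
    simp only [q, eval_mul, eval_sub, eval_X, eval_C]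
    rcases lt_or_gt_of_ne (ne_of_mem_erase hi) with h | h
    · exact mul_pos (sub_pos.2 (hr (by omega))) (sub_pos.2 (hr (by omega)))
    · exact mul_pos_of_neg_of_neg (sub_neg.2 (hr (by omega))) (sub_neg.2 (hr (by omega)))
  rw [hq_root, zero_mul, add_zero]
  exact mul_pos hq_deriv hq_other

theorem strictMono_cosh_natCast_add_one : StrictMono fun m : ℕ => cosh (m + 1) := by
  intro m m' h
  have hmm' : (m : ℝ) < m' := by exact_mod_cast h
  simp only [cosh_lt_cosh, abs_of_pos (by positivity : (0 : ℝ) < m + 1),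
    abs_of_pos (by positivity : (0 : ℝ) < m' + 1)]
  linarith

theorem sinh_mul_eval_cosh_pairedRootPoly {j k : ℕ} (hj : j < k) :
    let g := fun v => sinh v * (pairedRootPoly (fun m : ℕ => cosh (m + 1)) k).eval (cosh v)
    g (2 * j + 2) = 0 ∧ ∃ d > 0, HasDerivAt g d (2 * j + 2) := by
  have hroot : cosh (2 * j + 2) = cosh (((2 * j + 1 : ℕ) : ℝ) + 1) := by push_cast; ring_nf
  have hP := eval_pairedRootPoly_odd (fun m : ℕ => cosh (m + 1)) hj
  rw [← hroot] at hP
  refine ⟨by simp only [hP, mul_zero], _, ?_, hasDerivAt_sinh_mul_eval_cosh _ hP⟩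
  have hP' := eval_derivative_pairedRootPoly_odd_pos strictMono_cosh_natCast_add_one hj
  rw [← hroot] at hP'
  exact mul_pos (pow_pos (sinh_pos_iff.2 (by positivity)) 2) hP'

theorem hasDerivAt_sum_mul_cosh {ι : Type*} [Fintype ι] (α ω : ι → ℝ) (t : ℝ) :
    HasDerivAt (fun r => ∑ i, α i * cosh (ω i * r)) (∑ i, α i * ω i * sinh (ω i * t)) t :=
  HasDerivAt.fun_sum fun i _ =>
    (((hasDerivAt_cosh _).comp t ((hasDerivAt_id t).const_mul (ω i))).const_mul (α i)).congr_deriv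
      (by simp only [id, mul_one]; ring)

theorem exists_sum_mul_cosh_hasDerivAt {N : ℕ} (a : Fin (N + 1) → ℝ) (ha : 0 < a (Fin.last N))
    {s : ℝ} (hs : 0 < s) :
    ∃ μ α : Fin (N + 1) → ℝ, StrictAnti μ ∧ (∀ i, 0 < μ i) ∧ μ 0 = (s * (N + 1)) ^ 2 ∧
      α 0 = -1 ∧ ∃ c > 0, ∀ t, HasDerivAt (fun r => ∑ i, α i * cosh (√(μ i) * r))
        (-c * ∑ i, a i * sinh ((i + 1) * (s * t))) t := by
  set ω : Fin (N + 1) → ℝ := fun i => (i.rev : ℝ) + 1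
  have hω : StrictAnti ω := fun i j hij => by
    simpa only [ω, add_lt_add_iff_right, Nat.cast_lt, Fin.val_fin_lt] using Fin.rev_lt_rev.2 hij
  have hω_pos (i) : 0 < ω i := by positivity
  set c := (N + 1) / a (Fin.last N)
  refine ⟨fun i => (s * ω i) ^ 2, fun i => -c * a i.rev / ω i,
    fun i j hij => pow_lt_pow_left₀ (mul_lt_mul_of_pos_left (hω hij) hs) (by positivity) two_ne_zero,
    fun i => by positivity, by simp [ω], ?_, c * s, by positivity, fun t => ?_⟩
  · simp [ω, c]
    field_simp
  · refine (hasDerivAt_sum_mul_cosh _ _ t).congr_deriv ?_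
    conv_rhs => rw [← Equiv.sum_comp Fin.revPerm, Finset.mul_sum]
    refine Finset.sum_congr rfl fun i _ => ?_
    rw [sqrt_sq (mul_pos hs (hω_pos i)).le]
    simp only [Fin.revPerm_apply, ω]
    field_simp

theorem deriv_eq_zero_and_deriv_deriv_neg_of_hasDerivAt {F g : ℝ → ℝ} {c s u d : ℝ} (hc : 0 < c)
    (hs : 0 < s) (hF : ∀ t, HasDerivAt F (-c * g (s * t)) t) (hgu : g u = 0)
    (hg : HasDerivAt g d u) (hd : 0 < d) : deriv F (u / s) = 0 ∧ deriv (deriv F) (u / s) < 0 := by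
  have hsu : s * (u / s) = u := mul_div_cancel₀ u hs.ne'
  have hF' : deriv F = fun t => -c * g (s * t) := funext fun t => (hF t).deriv
  have hg' : HasDerivAt (fun t => g (s * t)) (d * s) (u / s) :=
    ((hsu ▸ hg).comp (u / s) ((hasDerivAt_id (u / s)).const_mul s)).congr_deriv (by simp)
  rw [hF', (hg'.const_mul (-c)).deriv]
  refine ⟨by simp [hsu, hgu], ?_⟩
  simpa only [neg_mul, neg_lt_zero] using mul_pos hc (mul_pos hd hs)

theorem statement17 (k : ℕ) (μ₀ : ℝ) (hμ₀ : 0 < μ₀) :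
    ∃ (n : ℕ) (hn : 0 < n) (μ α : Fin n → ℝ),
      -- μ₀/4 > μ₁ > μ₂ > … > μ_n > 0
      StrictAnti μ ∧ (∀ i, 0 < μ i) ∧ μ ⟨0, hn⟩ < μ₀ / 4 ∧
      -- α₁ = −1 (the coefficient attached to the largest frequency μ₁)
      α ⟨0, hn⟩ = -1 ∧
      -- F(t) = Σ_i α_i cosh(√μ_i t) has at least k nondegenerate local maximum points
      ∃ T : Finset ℝ, k ≤ T.card ∧ ∀ s ∈ T,
        deriv (fun r => ∑ i, α i * Real.cosh (Real.sqrt (μ i) * r)) s = 0 ∧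
        deriv (deriv (fun r => ∑ i, α i * Real.cosh (Real.sqrt (μ i) * r))) s < 0 := by
  set P := pairedRootPoly (fun m : ℕ => cosh (m + 1)) k
  obtain ⟨a, ha_last, ha⟩ := sinh_mul_eval_cosh_eq_sum P (natDegree_pairedRootPoly _ k).le
  have ha_pos : 0 < a (Fin.last (2 * k)) := by
    rw [ha_last, ← natDegree_pairedRootPoly _ k, coeff_natDegree, pairedRootPoly_monic]
    positivity
  set s := √μ₀ / (4 * (2 * k + 1))
  have hs : 0 < s := by positivity
  obtain ⟨μ, α, hμ, hμ_pos, hμ_zero, hα_zero, c, hc, hF⟩ :=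
    exists_sum_mul_cosh_hasDerivAt a ha_pos hs
  refine ⟨2 * k + 1, by omega, μ, α, hμ, hμ_pos, ?_, hα_zero,
    (range k).image fun j : ℕ => (2 * j + 2) / s, ?_, ?_⟩
  · have hsN : s * ((2 * k : ℕ) + 1) = √μ₀ / 4 := by
      simp only [s]
      push_cast
      field_simp
    change μ 0 < μ₀ / 4
    rw [hμ_zero, hsN, div_pow, sq_sqrt hμ₀.le]
    linarith
  · rw [Finset.card_image_of_injective _ fun i j hij => by simpa [hs.ne'] using hij, card_range]
  · simp only [Finset.mem_image, Finset.mem_range]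
    rintro _ ⟨j, hj, rfl⟩
    obtain ⟨hg_zero, d, hd, hg⟩ := sinh_mul_eval_cosh_pairedRootPoly hj
    exact deriv_eq_zero_and_deriv_deriv_neg_of_hasDerivAt hc hs
      (fun t => by simpa only [← ha] using hF t) hg_zero hg hd
end

section
/- Let k ∈ ℕ with k ≥ 2 and let 0 < t₁ < t₂ < … < t_k be real numbers. Define q(t) = −∏_{ℓ=1}^k (t² − t_ℓ²). Then every critical point of q is nondegenerate: for every τ ∈ ℝ, if q'(τ) = 0 then q''(τ) ≠ 0. More precisely, q'(0) = 0 with q''(0) ≠ 0, and for every τ ≠ 0 with q'(τ) = 0 one has q''(τ) = −4 τ² q(τ) Σ_{ℓ=1}^k (τ² − t_ℓ²)^{−2} ≠ 0. -/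
/-!
Write `q r = -P (r ^ 2)` with `P = ∏ ℓ, (X - C (t ℓ ^ 2))`, so that
`q' r = -2 r P'(r²)` and `q'' r = -2 P'(r²) - 4 r² P''(r²)`.

At `r = 0` this leaves `q'' 0 = -2 P'(0)`, and `P'(0) = P(0) ∑ (0 - t ℓ²)⁻¹` is nonzero because
all roots of `P` are positive. At a critical point `τ ≠ 0` we get `P'(τ²) = 0`; since the roots
`t ℓ²` are distinct, `P` is separable, so `P(τ²) ≠ 0`. Differentiating the logarithmic derivative
`P'/P = ∑ (x - a)⁻¹` once more gives `P''/P = (∑ (x - a)⁻¹)² - ∑ (x - a)⁻²`, and the first sum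
vanishes at `τ²`, which yields the formula for `q''(τ)` and its nonvanishing.
-/

open Polynomial

section Field

variable {K ι : Type*} [Field K]

theorem derivative_X_sub_C_mul (c : K) (p : K[X]) :
    derivative ((X - C c) * p) = p + (X - C c) * derivative p := by
  rw [derivative_mul, derivative_X_sub_C, one_mul]

theorem ne_of_eval_prod_X_sub_C_ne_zero {s : Finset ι} {a : ι → K} {x : K}
    (h : (∏ i ∈ s, (X - C (a i))).eval x ≠ 0) : ∀ i ∈ s, x ≠ a i := fun i hi hxi =>
  h <| by rw [eval_prod]; exact Finset.prod_eq_zero hi (by simp [hxi])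

theorem eval_derivative_prod_X_sub_C (s : Finset ι) (a : ι → K) {x : K}
    (hx : ∀ i ∈ s, x ≠ a i) :
    (derivative (∏ i ∈ s, (X - C (a i)))).eval x =
      (∏ i ∈ s, (X - C (a i))).eval x * ∑ i ∈ s, (x - a i)⁻¹ := by
  classical
  induction s using Finset.induction_on with
  | empty => simp
  | insert j s hj ih =>
    have hxj : x - a j ≠ 0 := sub_ne_zero.mpr (hx j (s.mem_insert_self j))
    rw [Finset.prod_insert hj, Finset.sum_insert hj, derivative_X_sub_C_mul, eval_add, eval_mul,
      eval_mul, ih fun i hi => hx i (Finset.mem_insert_of_mem hi), eval_sub, eval_X, eval_C]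
    field_simp

theorem eval_derivative_derivative_prod_X_sub_C (s : Finset ι) (a : ι → K) {x : K}
    (hx : ∀ i ∈ s, x ≠ a i) :
    (derivative (derivative (∏ i ∈ s, (X - C (a i))))).eval x =
      (∏ i ∈ s, (X - C (a i))).eval x *
        ((∑ i ∈ s, (x - a i)⁻¹) ^ 2 - ∑ i ∈ s, ((x - a i) ^ 2)⁻¹) := by
  classical
  induction s using Finset.induction_on with
  | empty => simp
  | insert j s hj ih =>
    have hs : ∀ i ∈ s, x ≠ a i := fun i hi => hx i (Finset.mem_insert_of_mem hi)
    have hxj : x - a j ≠ 0 := sub_ne_zero.mpr (hx j (s.mem_insert_self j))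
    rw [Finset.prod_insert hj, Finset.sum_insert hj, Finset.sum_insert hj, derivative_X_sub_C_mul,
      derivative_add, derivative_X_sub_C_mul]
    simp only [eval_add, eval_mul, eval_sub, eval_X, eval_C, eval_derivative_prod_X_sub_C s a hs,
      ih hs]
    field_simp
    ring

theorem eval_prod_X_sub_C_ne_zero_of_eval_derivative_eq_zero [Fintype ι] {a : ι → K}
    (ha : Function.Injective a) {x : K} (hx : (derivative (∏ i, (X - C (a i)))).eval x = 0) :
    (∏ i, (X - C (a i))).eval x ≠ 0 := fun h0 =>
  (separable_prod_X_sub_C_iff.mpr ha).aeval_derivative_ne_zero (x := x) h0 hx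

theorem eval_derivative_derivative_prod_X_sub_C_of_eval_derivative_eq_zero [Fintype ι]
    {a : ι → K} (ha : Function.Injective a) {x : K}
    (hx : (derivative (∏ i, (X - C (a i)))).eval x = 0) :
    (derivative (derivative (∏ i, (X - C (a i))))).eval x =
      -(∏ i, (X - C (a i))).eval x * ∑ i, ((x - a i) ^ 2)⁻¹ := by
  have hP := eval_prod_X_sub_C_ne_zero_of_eval_derivative_eq_zero ha hx
  have hxa := ne_of_eval_prod_X_sub_C_ne_zero hP
  rw [eval_derivative_prod_X_sub_C _ _ hxa, mul_eq_zero, or_iff_right hP] at hx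
  rw [eval_derivative_derivative_prod_X_sub_C _ _ hxa, hx]
  ring

end Field

section OrderedField

variable {K ι : Type*} [Field K] [LinearOrder K] [IsStrictOrderedRing K]

theorem eval_derivative_prod_X_sub_C_ne_zero_of_lt {s : Finset ι} (hs : s.Nonempty) {a : ι → K}
    {x : K} (hx : ∀ i ∈ s, x < a i) : (derivative (∏ i ∈ s, (X - C (a i)))).eval x ≠ 0 := by
  have hxa : ∀ i ∈ s, x ≠ a i := fun i hi => (hx i hi).ne
  have hP : (∏ i ∈ s, (X - C (a i))).eval x ≠ 0 := by
    rw [eval_prod]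
    exact Finset.prod_ne_zero_iff.mpr fun i hi => by simpa [sub_eq_zero] using hxa i hi
  have hsum : 0 < ∑ i ∈ s, (a i - x)⁻¹ :=
    Finset.sum_pos (fun i hi => inv_pos.mpr (sub_pos.mpr (hx i hi))) hs
  have hneg : ∑ i ∈ s, (x - a i)⁻¹ = -∑ i ∈ s, (a i - x)⁻¹ := by
    rw [← Finset.sum_neg_distrib]
    exact Finset.sum_congr rfl fun i _ => by rw [← inv_neg, neg_sub]
  rw [eval_derivative_prod_X_sub_C s a hxa, hneg]
  exact mul_ne_zero hP (neg_ne_zero.mpr hsum.ne')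

theorem eval_derivative_derivative_prod_X_sub_C_ne_zero [Fintype ι] [Nonempty ι] {a : ι → K}
    (ha : Function.Injective a) {x : K} (hx : (derivative (∏ i, (X - C (a i)))).eval x = 0) :
    (derivative (derivative (∏ i, (X - C (a i))))).eval x ≠ 0 := by
  have hP := eval_prod_X_sub_C_ne_zero_of_eval_derivative_eq_zero ha hx
  have hxa := ne_of_eval_prod_X_sub_C_ne_zero hP
  have hsum : 0 < ∑ i, ((x - a i) ^ 2)⁻¹ := Finset.sum_pos
    (fun i hi => by have := sub_ne_zero.mpr (hxa i hi); positivity) Finset.univ_nonempty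
  rw [eval_derivative_derivative_prod_X_sub_C_of_eval_derivative_eq_zero ha hx]
  exact mul_ne_zero (neg_ne_zero.mpr hP) hsum.ne'

end OrderedField

section EvalSq

variable {𝕜 : Type*} [NontriviallyNormedField 𝕜]

theorem hasDerivAt_eval_sq (p : 𝕜[X]) (r : 𝕜) :
    HasDerivAt (fun r => p.eval (r ^ 2)) (2 * r * (derivative p).eval (r ^ 2)) r := by
  refine ((p.hasDerivAt (r ^ 2)).comp r ((hasDerivAt_id r).fun_pow 2)).congr_deriv ?_
  simp only [id, Nat.cast_ofNat, mul_one]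
  ring

theorem deriv_eval_sq (p : 𝕜[X]) :
    deriv (fun r => p.eval (r ^ 2)) = fun r => 2 * r * (derivative p).eval (r ^ 2) :=
  funext fun r => (hasDerivAt_eval_sq p r).deriv

theorem deriv_deriv_eval_sq (p : 𝕜[X]) :
    deriv (deriv fun r => p.eval (r ^ 2)) = fun r =>
      2 * (derivative p).eval (r ^ 2) + 4 * r ^ 2 * (derivative (derivative p)).eval (r ^ 2) := by
  rw [deriv_eval_sq]
  funext r
  have h2r : HasDerivAt (fun r : 𝕜 => 2 * r) 2 r := by simpa using (hasDerivAt_id r).const_mul 2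
  rw [(h2r.fun_mul (hasDerivAt_eval_sq (derivative p) r)).deriv]
  ring

end EvalSq

section NegProdSqSub

variable {ι : Type*} [Fintype ι]

theorem neg_prod_sq_sub_eq_eval (a : ι → ℝ) :
    (fun r : ℝ => -∏ i, (r ^ 2 - a i)) = fun r => (-∏ i, (X - C (a i))).eval (r ^ 2) := by
  simp [eval_prod]

theorem deriv_neg_prod_sq_sub (a : ι → ℝ) (r : ℝ) :
    deriv (fun r : ℝ => -∏ i, (r ^ 2 - a i)) r =
      -(2 * r * (derivative (∏ i, (X - C (a i)))).eval (r ^ 2)) := by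
  rw [neg_prod_sq_sub_eq_eval, deriv_eval_sq]
  simp only [derivative_neg, eval_neg, mul_neg]

theorem deriv_deriv_neg_prod_sq_sub (a : ι → ℝ) (r : ℝ) :
    deriv (deriv fun r : ℝ => -∏ i, (r ^ 2 - a i)) r =
      -(2 * (derivative (∏ i, (X - C (a i)))).eval (r ^ 2) +
        4 * r ^ 2 * (derivative (derivative (∏ i, (X - C (a i))))).eval (r ^ 2)) := by
  rw [neg_prod_sq_sub_eq_eval, deriv_deriv_eval_sq]
  simp only [derivative_neg, eval_neg]
  ring

theorem eval_derivative_prod_X_sub_C_eq_zero_of_deriv_neg_prod_sq_sub_eq_zero {a : ι → ℝ} {τ : ℝ}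
    (hτ : τ ≠ 0) (h : deriv (fun r : ℝ => -∏ i, (r ^ 2 - a i)) τ = 0) :
    (derivative (∏ i, (X - C (a i)))).eval (τ ^ 2) = 0 := by
  simpa [deriv_neg_prod_sq_sub, hτ] using h

theorem deriv_deriv_neg_prod_sq_sub_of_deriv_eq_zero {a : ι → ℝ} (ha : Function.Injective a) {τ : ℝ}
    (hτ : τ ≠ 0) (h : deriv (fun r : ℝ => -∏ i, (r ^ 2 - a i)) τ = 0) :
    deriv (deriv fun r : ℝ => -∏ i, (r ^ 2 - a i)) τ =
      -4 * τ ^ 2 * (-∏ i, (τ ^ 2 - a i)) * ∑ i, ((τ ^ 2 - a i) ^ 2)⁻¹ := by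
  have h' := eval_derivative_prod_X_sub_C_eq_zero_of_deriv_neg_prod_sq_sub_eq_zero hτ h
  rw [deriv_deriv_neg_prod_sq_sub, h',
    eval_derivative_derivative_prod_X_sub_C_of_eval_derivative_eq_zero ha h', eval_prod]
  simp only [eval_sub, eval_X, eval_C]
  ring

theorem deriv_deriv_neg_prod_sq_sub_ne_zero_of_deriv_eq_zero [Nonempty ι] {a : ι → ℝ}
    (ha : Function.Injective a) {τ : ℝ} (hτ : τ ≠ 0)
    (h : deriv (fun r : ℝ => -∏ i, (r ^ 2 - a i)) τ = 0) :
    deriv (deriv fun r : ℝ => -∏ i, (r ^ 2 - a i)) τ ≠ 0 := by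
  have h' := eval_derivative_prod_X_sub_C_eq_zero_of_deriv_neg_prod_sq_sub_eq_zero hτ h
  rw [deriv_deriv_neg_prod_sq_sub, h']
  simpa [hτ] using eval_derivative_derivative_prod_X_sub_C_ne_zero ha h'

theorem deriv_deriv_neg_prod_sq_sub_zero_ne_zero [Nonempty ι] {a : ι → ℝ} (ha : ∀ i, 0 < a i) :
    deriv (deriv fun r : ℝ => -∏ i, (r ^ 2 - a i)) 0 ≠ 0 := by
  rw [deriv_deriv_neg_prod_sq_sub]
  simpa using eval_derivative_prod_X_sub_C_ne_zero_of_lt Finset.univ_nonempty fun i _ => ha i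

end NegProdSqSub

theorem statement18 (k : ℕ) (hk : 2 ≤ k)
    (t : Fin k → ℝ) (ht : StrictMono t) (htpos : ∀ i, 0 < t i) :
    -- q(τ) = −∏_ℓ (τ² − t_ℓ²)
    -- every critical point of q is nondegenerate
    (∀ τ : ℝ, deriv (fun r : ℝ => -∏ l, (r ^ 2 - (t l) ^ 2)) τ = 0 →
      deriv (deriv (fun r : ℝ => -∏ l, (r ^ 2 - (t l) ^ 2))) τ ≠ 0) ∧
    -- q'(0) = 0 and q''(0) ≠ 0
    deriv (fun r : ℝ => -∏ l, (r ^ 2 - (t l) ^ 2)) 0 = 0 ∧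
    deriv (deriv (fun r : ℝ => -∏ l, (r ^ 2 - (t l) ^ 2))) 0 ≠ 0 ∧
    -- for τ ≠ 0 with q'(τ) = 0, q''(τ) = −4τ² q(τ) Σ_ℓ (τ² − t_ℓ²)⁻² ≠ 0
    ∀ τ : ℝ, τ ≠ 0 → deriv (fun r : ℝ => -∏ l, (r ^ 2 - (t l) ^ 2)) τ = 0 →
      deriv (deriv (fun r : ℝ => -∏ l, (r ^ 2 - (t l) ^ 2))) τ =
        -4 * τ ^ 2 * (-∏ l, (τ ^ 2 - (t l) ^ 2)) * ∑ l, ((τ ^ 2 - (t l) ^ 2) ^ 2)⁻¹ ∧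
      deriv (deriv (fun r : ℝ => -∏ l, (r ^ 2 - (t l) ^ 2))) τ ≠ 0 := by
  have : Nonempty (Fin k) := ⟨⟨0, by omega⟩⟩
  have hinj : Function.Injective fun l => t l ^ 2 := fun i j h =>
    ht.injective ((sq_eq_sq₀ (htpos i).le (htpos j).le).mp h)
  have hzero := deriv_deriv_neg_prod_sq_sub_zero_ne_zero fun l => pow_pos (htpos l) 2
  refine ⟨fun τ h => ?_, by simp [deriv_neg_prod_sq_sub], hzero, fun τ hτ h =>
    ⟨deriv_deriv_neg_prod_sq_sub_of_deriv_eq_zero hinj hτ h,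
      deriv_deriv_neg_prod_sq_sub_ne_zero_of_deriv_eq_zero hinj hτ h⟩⟩
  rcases eq_or_ne τ 0 with rfl | hτ
  · exact hzero
  · exact deriv_deriv_neg_prod_sq_sub_ne_zero_of_deriv_eq_zero hinj hτ h
end
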